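/- arXiv:2007.14582 — 4 statements merged into one kernel-verified Lean document; each statement's English description precedes it below -/
import Mathlib

section
/- Under the bounds 0 < α₁ ≤ α ≤ α₂, |β| ≤ β₂, 0 < γ₁ ≤ γ ≤ γ₂, the eigenvalues satisfy γ₁²/(β₂ + √(β₂² + α₂²γ₂²)) ≤ |λ₊| ≤ (β₂ + √(β₂² + α₂²γ₂²))/α₁², and the same bounds hold for |λ₋|. -/
set_option maxHeartbeats 1000000 in
/-- Bounds on |λ₊| and |λ₋| under the standing bounds on α, β, γ. -/
theorem stmt1 (α₁ α₂ β₂ γ₁ γ₂ α β γ : ℝ)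
    (hα₁ : 0 < α₁) (hβ₂ : 0 < β₂) (hγ₁ : 0 < γ₁)
    (hα : α₁ ≤ α ∧ α ≤ α₂) (hβ : |β| ≤ β₂) (hγ : γ₁ ≤ γ ∧ γ ≤ γ₂) :
    (γ₁ ^ 2 / (β₂ + Real.sqrt (β₂ ^ 2 + α₂ ^ 2 * γ₂ ^ 2)) ≤
        |(β + Real.sqrt (β ^ 2 + α ^ 2 * γ ^ 2)) / α ^ 2| ∧
      |(β + Real.sqrt (β ^ 2 + α ^ 2 * γ ^ 2)) / α ^ 2| ≤
        (β₂ + Real.sqrt (β₂ ^ 2 + α₂ ^ 2 * γ₂ ^ 2)) / α₁ ^ 2) ∧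
    (γ₁ ^ 2 / (β₂ + Real.sqrt (β₂ ^ 2 + α₂ ^ 2 * γ₂ ^ 2)) ≤
        |(β - Real.sqrt (β ^ 2 + α ^ 2 * γ ^ 2)) / α ^ 2| ∧
      |(β - Real.sqrt (β ^ 2 + α ^ 2 * γ ^ 2)) / α ^ 2| ≤
        (β₂ + Real.sqrt (β₂ ^ 2 + α₂ ^ 2 * γ₂ ^ 2)) / α₁ ^ 2) := by
  obtain ⟨hα1, hα2⟩ := hα
  obtain ⟨hγ1, hγ2⟩ := hγ
  have hαpos : 0 < α := lt_of_lt_of_le hα₁ hα1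
  have hγpos : 0 < γ := lt_of_lt_of_le hγ₁ hγ1
  set S := Real.sqrt (β ^ 2 + α ^ 2 * γ ^ 2) with hSdef
  set S₂ := Real.sqrt (β₂ ^ 2 + α₂ ^ 2 * γ₂ ^ 2) with hS₂def
  clear_value S S₂
  obtain ⟨hβb1, hβb2⟩ := abs_le.mp hβ
  have hSsq : S ^ 2 = β ^ 2 + α ^ 2 * γ ^ 2 := by
    rw [hSdef]; exact Real.sq_sqrt (by positivity)
  have hS₂sq : S₂ ^ 2 = β₂ ^ 2 + α₂ ^ 2 * γ₂ ^ 2 := by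
    rw [hS₂def]; exact Real.sq_sqrt (by positivity)
  have hSnn : 0 ≤ S := hSdef ▸ Real.sqrt_nonneg _
  have hS₂nn : 0 ≤ S₂ := hS₂def ▸ Real.sqrt_nonneg _
  have hag : 0 < α ^ 2 * γ ^ 2 := by positivity
  have hβS : |β| < S := by
    rw [hSdef, Real.lt_sqrt (abs_nonneg β), sq_abs]
    linarith
  obtain ⟨hβS1, hβS2⟩ := abs_lt.mp hβS
  have hSS₂ : S ≤ S₂ := by
    rw [hSdef, hS₂def]
    apply Real.sqrt_le_sqrt
    have hb2 : β ^ 2 ≤ β₂ ^ 2 := by nlinarith [sq_abs β, abs_nonneg β]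
    have ha2 : α ^ 2 ≤ α₂ ^ 2 := by nlinarith
    have hg2 : γ ^ 2 ≤ γ₂ ^ 2 := by nlinarith
    nlinarith [mul_le_mul ha2 hg2 (sq_nonneg γ) (by positivity : (0:ℝ) ≤ α₂ ^ 2)]
  have hden : 0 < β₂ + S₂ := by linarith
  have hkey : (S + β) * (S - β) = α ^ 2 * γ ^ 2 := by linear_combination hSsq
  have hα2sq : (0:ℝ) < α ^ 2 := by positivity
  have hα1sq : (0:ℝ) < α₁ ^ 2 := by positivity
  have habsP : |(β + S) / α ^ 2| = (β + S) / α ^ 2 :=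
    abs_of_nonneg (div_nonneg (by linarith) hα2sq.le)
  have habsM : |(β - S) / α ^ 2| = (S - β) / α ^ 2 := by
    have hle : (β - S) / α ^ 2 ≤ 0 :=
      div_nonpos_of_nonpos_of_nonneg (by linarith) (le_of_lt hα2sq)
    rw [abs_of_nonpos hle]
    ring
  have hα12 : α₁ ^ 2 ≤ α ^ 2 := pow_le_pow_left₀ hα₁.le hα1 2
  have hgsq : γ₁ ^ 2 * α ^ 2 ≤ γ ^ 2 * α ^ 2 :=
    mul_le_mul_of_nonneg_right (pow_le_pow_left₀ hγ₁.le hγ1 2) hα2sq.le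
  refine ⟨⟨?_, ?_⟩, ?_, ?_⟩
  · rw [habsP, div_le_div_iff₀ hden hα2sq]
    nlinarith [mul_le_mul_of_nonneg_left (by linarith : S - β ≤ β₂ + S₂)
      (by linarith : (0:ℝ) ≤ S + β)]
  · rw [habsP, div_le_div_iff₀ hα2sq hα1sq]
    exact mul_le_mul (by linarith) hα12 hα1sq.le (by linarith)
  · rw [habsM, div_le_div_iff₀ hden hα2sq]
    nlinarith [mul_le_mul_of_nonneg_left (by linarith : S + β ≤ β₂ + S₂)
      (by linarith : (0:ℝ) ≤ S - β)]
  · rw [habsM, div_le_div_iff₀ hα2sq hα1sq]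
    exact mul_le_mul (by linarith) hα12 hα1sq.le (by linarith)
end

section
/- With c₁ := α λ₋ and c₂ := α λ₊ as above, for i = 1, 2 one has α₁²γ₁²/(2(β₂² + α₂²γ₂² + β₂√(β₂² + α₂²γ₂²))) ≤ |cᵢ/(c₂ - c₁)| ≤ (β₂ + √(β₂² + α₂²γ₂²))/(2α₁γ₁), under the standing bounds on α, β, γ. -/
set_option maxHeartbeats 800000

lemma stmt3_key (α₁ α₂ β₂ γ₁ γ₂ α β γ s S : ℝ)
    (hα₁ : 0 < α₁) (hβ₂ : 0 < β₂) (hγ₁ : 0 < γ₁)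
    (hα : α₁ ≤ α ∧ α ≤ α₂) (hβ : |β| ≤ β₂) (hγ : γ₁ ≤ γ ∧ γ ≤ γ₂)
    (hs : s = Real.sqrt (β ^ 2 + α ^ 2 * γ ^ 2))
    (hS : S = Real.sqrt (β₂ ^ 2 + α₂ ^ 2 * γ₂ ^ 2)) :
    α₁ ^ 2 * γ₁ ^ 2 / (2 * (β₂ ^ 2 + α₂ ^ 2 * γ₂ ^ 2 + β₂ * S)) ≤ (s - β) / (2 * s) ∧
      (s - β) / (2 * s) ≤ (β₂ + S) / (2 * α₁ * γ₁) := by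
  have hαγ : α₁ * γ₁ ≤ α * γ :=
    mul_le_mul hα.1 hγ.1 hγ₁.le (le_trans hα₁.le hα.1)
  have hαγ0 : 0 < α * γ := lt_of_lt_of_le (mul_pos hα₁ hγ₁) hαγ
  have hs2 : s ^ 2 = β ^ 2 + α ^ 2 * γ ^ 2 := by
    rw [hs]; exact Real.sq_sqrt (by positivity)
  have hs0 : 0 ≤ s := hs ▸ Real.sqrt_nonneg _
  have hβs : |β| < s := by
    have h2 : |β| ^ 2 < s ^ 2 := by rw [sq_abs, hs2]; nlinarith
    exact lt_of_pow_lt_pow_left₀ 2 hs0 h2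
  have hspos : 0 < s := lt_of_le_of_lt (abs_nonneg β) hβs
  have hS2 : S ^ 2 = β₂ ^ 2 + α₂ ^ 2 * γ₂ ^ 2 := by
    rw [hS]; exact Real.sq_sqrt (by nlinarith)
  have hS0 : 0 ≤ S := hS ▸ Real.sqrt_nonneg _
  have hsS : s ≤ S := by
    rw [hs, hS]
    apply Real.sqrt_le_sqrt
    have hb : β ^ 2 ≤ β₂ ^ 2 := by
      rw [← sq_abs]; exact pow_le_pow_left₀ (abs_nonneg β) hβ 2
    have ha : α ^ 2 * γ ^ 2 ≤ α₂ ^ 2 * γ₂ ^ 2 := by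
      have h1 : α * γ ≤ α₂ * γ₂ :=
        mul_le_mul hα.2 hγ.2 (le_trans hγ₁.le hγ.1) (by linarith [hα₁, hα.1, hα.2])
      nlinarith [hαγ0, h1]
    linarith
  have hbetaS : -β < s := lt_of_le_of_lt (neg_le_abs β) hβs
  have hβS : β < s := lt_of_le_of_lt (le_abs_self β) hβs
  constructor
  · -- lower bound
    have heq : (s - β) / (2 * s) = α ^ 2 * γ ^ 2 / (2 * (s ^ 2 + β * s)) := by
      rw [div_eq_div_iff (by positivity) (by nlinarith [mul_pos hspos (by linarith : (0:ℝ) < s + β)])]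
      linear_combination 2 * s * hs2
    rw [heq]
    apply div_le_div₀ (by positivity)
    · calc α₁ ^ 2 * γ₁ ^ 2 = (α₁ * γ₁) ^ 2 := by ring
        _ ≤ (α * γ) ^ 2 := pow_le_pow_left₀ (by positivity) hαγ 2
        _ = α ^ 2 * γ ^ 2 := by ring
    · nlinarith [mul_pos hspos (by linarith : (0:ℝ) < s + β)]
    · have h1 : β * s ≤ β₂ * S := by
        calc β * s ≤ |β| * s := by nlinarith [le_abs_self β]
        _ ≤ β₂ * S := mul_le_mul hβ hsS hspos.le hβ₂.le
      have h2 : s ^ 2 ≤ S ^ 2 := pow_le_pow_left₀ hs0 hsS 2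
      rw [hS2] at h2
      linarith
  · -- upper bound
    apply div_le_div₀ (by positivity)
    · have : -β ≤ β₂ := le_trans (neg_le_abs β) hβ
      linarith
    · positivity
    · have : α₁ * γ₁ ≤ s := by
        have : α * γ ≤ s := by
          have h2 : Real.sqrt ((α * γ) ^ 2) ≤ s := by
            rw [hs]; exact Real.sqrt_le_sqrt (by nlinarith)
          rwa [Real.sqrt_sq hαγ0.le] at h2
        linarith
      linarith

/-- Bounds on |cᵢ/(c₂-c₁)| for i = 1,2 under the standing bounds on α, β, γ. -/
theorem stmt3 (α₁ α₂ β₂ γ₁ γ₂ α β γ : ℝ)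
    (hα₁ : 0 < α₁) (hβ₂ : 0 < β₂) (hγ₁ : 0 < γ₁)
    (hα : α₁ ≤ α ∧ α ≤ α₂) (hβ : |β| ≤ β₂) (hγ : γ₁ ≤ γ ∧ γ ≤ γ₂)
    (c₁ c₂ : ℝ)
    (hc₁ : c₁ = α * ((β - Real.sqrt (β ^ 2 + α ^ 2 * γ ^ 2)) / α ^ 2))
    (hc₂ : c₂ = α * ((β + Real.sqrt (β ^ 2 + α ^ 2 * γ ^ 2)) / α ^ 2)) :
    (α₁ ^ 2 * γ₁ ^ 2 /
        (2 * (β₂ ^ 2 + α₂ ^ 2 * γ₂ ^ 2 + β₂ * Real.sqrt (β₂ ^ 2 + α₂ ^ 2 * γ₂ ^ 2))) ≤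
        |c₁ / (c₂ - c₁)| ∧
      |c₁ / (c₂ - c₁)| ≤ (β₂ + Real.sqrt (β₂ ^ 2 + α₂ ^ 2 * γ₂ ^ 2)) / (2 * α₁ * γ₁)) ∧
    (α₁ ^ 2 * γ₁ ^ 2 /
        (2 * (β₂ ^ 2 + α₂ ^ 2 * γ₂ ^ 2 + β₂ * Real.sqrt (β₂ ^ 2 + α₂ ^ 2 * γ₂ ^ 2))) ≤
        |c₂ / (c₂ - c₁)| ∧
      |c₂ / (c₂ - c₁)| ≤ (β₂ + Real.sqrt (β₂ ^ 2 + α₂ ^ 2 * γ₂ ^ 2)) / (2 * α₁ * γ₁)) := by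
  set s := Real.sqrt (β ^ 2 + α ^ 2 * γ ^ 2) with hs
  set S := Real.sqrt (β₂ ^ 2 + α₂ ^ 2 * γ₂ ^ 2) with hS
  have hαpos : 0 < α := lt_of_lt_of_le hα₁ hα.1
  have hαγ0 : 0 < α * γ := mul_pos hαpos (lt_of_lt_of_le hγ₁ hγ.1)
  have hs2 : s ^ 2 = β ^ 2 + α ^ 2 * γ ^ 2 := Real.sq_sqrt (by positivity)
  have hs0 : 0 ≤ s := Real.sqrt_nonneg _
  have hβs : |β| < s := by
    have h2 : |β| ^ 2 < s ^ 2 := by rw [sq_abs, hs2]; nlinarith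
    exact lt_of_pow_lt_pow_left₀ 2 hs0 h2
  have hspos : 0 < s := lt_of_le_of_lt (abs_nonneg β) hβs
  have hd : c₂ - c₁ = 2 * s / α := by
    rw [hc₁, hc₂]; field_simp; ring
  have h1 : c₁ / (c₂ - c₁) = (β - s) / (2 * s) := by
    rw [hd, hc₁]; field_simp
  have h2 : c₂ / (c₂ - c₁) = (β + s) / (2 * s) := by
    rw [hd, hc₂]; field_simp
  have habs1 : |c₁ / (c₂ - c₁)| = (s - β) / (2 * s) := by
    rw [h1, show (β - s) / (2 * s) = -((s - β) / (2 * s)) by ring, abs_neg,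
      abs_of_nonneg]
    have : β < s := lt_of_le_of_lt (le_abs_self β) hβs
    exact div_nonneg (by linarith) (by linarith)
  have habs2 : |c₂ / (c₂ - c₁)| = (s - (-β)) / (2 * s) := by
    rw [h2, show (β + s) / (2 * s) = (s - (-β)) / (2 * s) by ring, abs_of_nonneg]
    have : -β < s := lt_of_le_of_lt (neg_le_abs β) hβs
    exact div_nonneg (by linarith) (by linarith)
  rw [habs1, habs2]
  constructor
  · exact stmt3_key α₁ α₂ β₂ γ₁ γ₂ α β γ s S hα₁ hβ₂ hγ₁ hα hβ hγ hs hS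
  · have := stmt3_key α₁ α₂ β₂ γ₁ γ₂ α (-β) γ s S hα₁ hβ₂ hγ₁ hα (by rwa [abs_neg]) hγ
      (by rw [hs]; ring_nf) hS
    exact this
end

section
/- Let μ be a finite positive Borel measure on ℝ and define x(ω) := sup{x : x + μ((-∞, x]) < ω}. Then for every ω ∈ ℝ there exists θ ∈ [0,1] such that ω = x(ω) + μ((-∞, x(ω))) + θ·μ({x(ω)}). -/
/-!
Let `F x = x + μ(-∞, x]`: it is monotone and right-continuous, with left limit
`x + μ(-∞, x)` at `x`. At `s = X ω = sup {x | F x < ω}`, every `x < s` has `F x < ω`, so the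
left limit gives `s + μ(-∞, s) ≤ ω`; if `F s < ω`, right-continuity would put points `> s` into
the set, so `ω ≤ F s = s + μ(-∞, s) + μ{s}`. Hence `ω` lies in a segment of length `μ{s}`.
-/

open MeasureTheory Set Filter Topology

section MeasureOfIic

variable {α : Type*} [LinearOrder α] [TopologicalSpace α] [OrderTopology α] [DenselyOrdered α]
  [FirstCountableTopology α] [MeasurableSpace α]

theorem tendsto_measure_Iic_nhdsLT (μ : Measure α) (a : α) :
    Tendsto (fun x ↦ μ (Iic x)) (𝓝[<] a) (𝓝 (μ (Iio a))) := by
  have : (atTop : Filter (Iio a)).IsCountablyGenerated := by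
    rw [← comap_coe_Iio_nhdsLT a]
    infer_instance
  have hunion : ⋃ x : Iio a, Iic (x : α) = Iio a := by
    ext y
    simp only [mem_iUnion, mem_Iic, mem_Iio, Subtype.exists, exists_prop]
    exact ⟨fun ⟨x, hxa, hyx⟩ ↦ hyx.trans_lt hxa, fun hya ↦ ⟨y, hya, le_rfl⟩⟩
  rw [← map_coe_Iio_atTop a, tendsto_map'_iff]
  have := tendsto_measure_iUnion_atTop (μ := μ) fun (x y : Iio a) (hxy : x ≤ y) ↦
    Iic_subset_Iic.2 (Subtype.coe_le_coe.2 hxy)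
  rwa [hunion] at this

theorem tendsto_measure_Iic_nhdsGT [NoMaxOrder α] [OpensMeasurableSpace α] (μ : Measure α)
    [IsFiniteMeasure μ] (a : α) :
    Tendsto (fun x ↦ μ (Iic x)) (𝓝[>] a) (𝓝 (μ (Iic a))) := by
  have hinter : ⋂ r > a, Iic r = Iic a := by
    ext y
    simp only [mem_iInter, mem_Iic]
    exact ⟨le_of_forall_gt_imp_ge_of_dense, fun hya r hr ↦ hya.trans hr.le⟩
  rw [← hinter]
  obtain ⟨r, hr⟩ := exists_gt a
  exact tendsto_measure_biInter_gt (fun _ _ ↦ measurableSet_Iic.nullMeasurableSet)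
    (fun _ _ _ h ↦ Iic_subset_Iic.2 h) ⟨r, hr, measure_ne_top μ _⟩

end MeasureOfIic

section GeneralizedInverse

variable {α β : Type*} [ConditionallyCompleteLinearOrder α] [LinearOrder β] {f : α → β} {ω : β}

theorem Monotone.lt_of_lt_csSup_setOf_lt (hf : Monotone f) (hne : {x | f x < ω}.Nonempty)
    {x : α} (hx : x < sSup {x | f x < ω}) : f x < ω := by
  obtain ⟨y, hy, hxy⟩ := exists_lt_of_lt_csSup hne hx
  exact (hf hxy.le).trans_lt hy

variable [TopologicalSpace α] [TopologicalSpace β] [OrderTopology β]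

theorem Monotone.le_of_tendsto_nhdsLT_csSup_setOf_lt (hf : Monotone f)
    (hne : {x | f x < ω}.Nonempty) {L : β} [(𝓝[<] sSup {x | f x < ω}).NeBot]
    (hL : Tendsto f (𝓝[<] sSup {x | f x < ω}) (𝓝 L)) : L ≤ ω :=
  _root_.le_of_tendsto hL <| eventually_nhdsWithin_of_forall fun _ hx ↦
    (hf.lt_of_lt_csSup_setOf_lt hne hx).le

theorem le_of_continuousWithinAt_Ioi_csSup_setOf_lt (hbdd : BddAbove {x | f x < ω})
    [(𝓝[>] sSup {x | f x < ω}).NeBot]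
    (hc : ContinuousWithinAt f (Ioi (sSup {x | f x < ω})) (sSup {x | f x < ω})) :
    ω ≤ f (sSup {x | f x < ω}) := by
  by_contra! h
  obtain ⟨y, hy, hsy⟩ := ((hc.eventually (eventually_lt_nhds h)).and self_mem_nhdsWithin).exists
  exact (le_csSup hbdd hy).not_gt hsy

end GeneralizedInverse

theorem measureReal_Iio_add_measureReal_singleton {α : Type*} [LinearOrder α] [MeasurableSpace α]
    [MeasurableSingletonClass α] (μ : Measure α) [IsFiniteMeasure μ] (a : α) :
    μ.real (Iio a) + μ.real {a} = μ.real (Iic a) := by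
  rw [← Iio_union_right, measureReal_union (by simp) (measurableSet_singleton a)]

theorem exists_mem_Icc_zero_one_eq_add_mul {𝕜 : Type*} [Field 𝕜] [LinearOrder 𝕜]
    [IsStrictOrderedRing 𝕜] {a b c : 𝕜} (hb : 0 ≤ b) (hc : c ∈ Icc a (a + b)) :
    ∃ θ ∈ Icc (0 : 𝕜) 1, c = a + θ * b := by
  rw [← segment_eq_Icc (le_add_of_nonneg_right hb), segment_eq_image'] at hc
  obtain ⟨θ, hθ, rfl⟩ := hc
  exact ⟨θ, hθ, by simp⟩

noncomputable def idAddCdf (μ : Measure ℝ) (x : ℝ) : ℝ := x + μ.real (Iic x)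

section IdAddCdf

variable (μ : Measure ℝ)

theorem bddAbove_setOf_idAddCdf_lt (ω : ℝ) : BddAbove {x | idAddCdf μ x < ω} :=
  ⟨ω, fun _ hx ↦ (le_add_of_nonneg_right measureReal_nonneg).trans hx.le⟩

variable [IsFiniteMeasure μ]

theorem monotone_idAddCdf : Monotone (idAddCdf μ) := fun _ _ h ↦
  add_le_add h (measureReal_mono (Iic_subset_Iic.2 h))

theorem nonempty_setOf_idAddCdf_lt (ω : ℝ) : {x | idAddCdf μ x < ω}.Nonempty := by
  refine ⟨ω - 1 - μ.real univ, ?_⟩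
  have := measureReal_mono (μ := μ) (subset_univ (Iic (ω - 1 - μ.real univ)))
  simp only [mem_ofPred_eq, idAddCdf]
  linarith

theorem tendsto_idAddCdf_nhdsLT (a : ℝ) :
    Tendsto (idAddCdf μ) (𝓝[<] a) (𝓝 (a + μ.real (Iio a))) :=
  (tendsto_nhdsWithin_of_tendsto_nhds tendsto_id).add
    ((ENNReal.tendsto_toReal (measure_ne_top μ _)).comp (tendsto_measure_Iic_nhdsLT μ a))

theorem continuousWithinAt_idAddCdf_Ioi (a : ℝ) : ContinuousWithinAt (idAddCdf μ) (Ioi a) a :=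
  (tendsto_nhdsWithin_of_tendsto_nhds tendsto_id).add
    ((ENNReal.tendsto_toReal (measure_ne_top μ _)).comp (tendsto_measure_Iic_nhdsGT μ a))

end IdAddCdf

/-- ω = x(ω) + μ((-∞, x(ω))) + θ·μ({x(ω)}) for some θ ∈ [0,1]. -/
theorem stmt7 (μ : Measure ℝ) [IsFiniteMeasure μ]
    (X : ℝ → ℝ)
    (hX : ∀ ω, X ω = sSup {x : ℝ | x + (μ (Set.Iic x)).toReal < ω}) :
    ∀ ω : ℝ, ∃ θ ∈ Set.Icc (0 : ℝ) 1,
      ω = X ω + (μ (Set.Iio (X ω))).toReal + θ * (μ {X ω}).toReal := by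
  intro ω
  have hXω : X ω = sSup {x | idAddCdf μ x < ω} := hX ω
  have hleft : X ω + μ.real (Iio (X ω)) ≤ ω := by
    rw [hXω]
    exact (monotone_idAddCdf μ).le_of_tendsto_nhdsLT_csSup_setOf_lt
      (nonempty_setOf_idAddCdf_lt μ ω) (tendsto_idAddCdf_nhdsLT μ _)
  have hright : ω ≤ X ω + μ.real (Iio (X ω)) + μ.real {X ω} := by
    rw [add_assoc, measureReal_Iio_add_measureReal_singleton, hXω]
    exact le_of_continuousWithinAt_Ioi_csSup_setOf_lt (bddAbove_setOf_idAddCdf_lt μ ω)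
      (continuousWithinAt_idAddCdf_Ioi μ _)
  exact exists_mem_Icc_zero_one_eq_add_mul measureReal_nonneg ⟨hleft, hright⟩
end

section
/- Let u ∈ L∞((a,b)×(c,d)) and f ∈ L¹((a,b)×(c,d)). Suppose there exist null sets N_X ⊂ (a,b), N_Y ⊂ (c,d) such that for all X̄₁ < X̄₂ not in N_X and Ȳ₁ < Ȳ₂ not in N_Y: ∫_{Ȳ₁}^{Ȳ₂} [u(X̄₂,Y) - u(X̄₁,Y)] dY = ∫_{Ȳ₁}^{Ȳ₂} ∫_{X̄₁}^{X̄₂} f(X,Y) dX dY. Then after modification on a null set, for a.e. Y₀ the map X ↦ u(X,Y₀) is absolutely continuous with ∂_X u(X,Y₀) = f(X,Y₀) a.e. -/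
/-!
Fix a good abscissa `x₀` and put `v (X, Y) = u (x₀, Y) + ∫ S in x₀..X, f (S, Y)`, with `f`
replaced by a strongly measurable representative so that `v` is measurable. For almost every `X`,
the hypothesis says that `Y ↦ u (X, Y) - v (X, Y)` has zero integral over almost every interval of
`(c, d)`; its primitive is then continuous and constant off a null set, hence constant, and the
Lebesgue differentiation theorem makes the function vanish a.e. Fubini gives `v = u` a.e. on the
rectangle, and the increment formula for `v` holds on every line on which `f` is integrable.
-/

open MeasureTheory Set Filter Topology Function

namespace MeasureTheory

variable {E : Type*} [NormedAddCommGroup E]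
  {α β : Type*} [MeasurableSpace α] [MeasurableSpace β] {μ : Measure α} {ν : Measure β}
  [SFinite μ] [SFinite ν]

theorem IntegrableOn.prod_right_ae {f : α × β → E} {s : Set α} {t : Set β}
    (hf : IntegrableOn f (s ×ˢ t) (μ.prod ν)) :
    ∀ᵐ x ∂μ.restrict s, IntegrableOn (fun y => f (x, y)) t ν := by
  rw [IntegrableOn, ← Measure.prod_restrict] at hf
  exact hf.prod_right_ae

theorem IntegrableOn.prod_left_ae {f : α × β → E} {s : Set α} {t : Set β}
    (hf : IntegrableOn f (s ×ˢ t) (μ.prod ν)) :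
    ∀ᵐ y ∂ν.restrict t, IntegrableOn (fun x => f (x, y)) s μ := by
  rw [IntegrableOn, ← Measure.prod_restrict] at hf
  exact hf.prod_left_ae

theorem ae_ae_swap_of_ae_restrict_prod {p : α × β → Prop} {s : Set α} {t : Set β}
    (h : ∀ᵐ z ∂(μ.prod ν).restrict (s ×ˢ t), p z) :
    ∀ᵐ y ∂ν.restrict t, ∀ᵐ x ∂μ.restrict s, p (x, y) := by
  rw [← Measure.prod_restrict] at h
  exact Measure.ae_ae_of_ae_prod
    ((Measure.measurePreserving_swap (μ := ν.restrict t)).quasiMeasurePreserving.ae h)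

variable [NormedSpace ℝ E]

theorem stronglyMeasurable_setIntegral_Ioc {F : α → ℝ → E}
    (hF : StronglyMeasurable (uncurry F)) {l r : α → ℝ} (hl : Measurable l) (hr : Measurable r) :
    StronglyMeasurable fun x => ∫ t in Ioc (l x) (r x), F x t := by
  have hA : MeasurableSet {p : α × ℝ | l p.1 < p.2 ∧ p.2 ≤ r p.1} :=
    (measurableSet_lt (hl.comp measurable_fst) measurable_snd).inter
      (measurableSet_le measurable_snd (hr.comp measurable_fst))
  convert StronglyMeasurable.integral_prod_right (ν := volume)
    (f := fun x t => {p : α × ℝ | l p.1 < p.2 ∧ p.2 ≤ r p.1}.indicator (uncurry F) (x, t))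
    (hF.indicator hA) using 2 with x
  rw [← integral_indicator measurableSet_Ioc]
  rfl

theorem stronglyMeasurable_intervalIntegral {F : α → ℝ → E}
    (hF : StronglyMeasurable (uncurry F)) {l r : α → ℝ} (hl : Measurable l) (hr : Measurable r) :
    StronglyMeasurable fun x => ∫ t in l x..r x, F x t :=
  (stronglyMeasurable_setIntegral_Ioc hF hl hr).sub (stronglyMeasurable_setIntegral_Ioc hF hr hl)

theorem IntegrableOn.integral_prod_right {f : α × β → E} {s : Set α} {t : Set β}
    (hf : IntegrableOn f (s ×ˢ t) (μ.prod ν)) :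
    IntegrableOn (fun y => ∫ x in s, f (x, y) ∂μ) t ν := by
  rw [IntegrableOn, ← Measure.prod_restrict] at hf
  exact hf.integral_prod_right

theorem IntegrableOn.intervalIntegral_prod_right {f : ℝ × β → E} {s : Set ℝ} {t : Set β}
    (hf : IntegrableOn f (s ×ˢ t) (volume.prod ν)) {x₁ x₂ : ℝ} (hx : uIcc x₁ x₂ ⊆ s) :
    IntegrableOn (fun y => ∫ x in x₁..x₂, f (x, y)) t ν := by
  have hIoc : ∀ {a b}, uIcc a b ⊆ s → IntegrableOn (fun y => ∫ x in Ioc a b, f (x, y)) t ν :=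
    fun h => (hf.mono_set (prod_mono (Ioc_subset_Icc_self.trans (Icc_subset_uIcc.trans h))
      subset_rfl)).integral_prod_right
  exact (hIoc hx).sub (hIoc (uIcc_comm x₁ x₂ ▸ hx))

theorem ae_restrict_intervalIntegral_eq_of_ae_eq_prod {f g : ℝ × β → E} {s : Set ℝ}
    (hs : s.OrdConnected) {t : Set β} (hfg : f =ᵐ[(volume.prod ν).restrict (s ×ˢ t)] g) :
    ∀ᵐ y ∂ν.restrict t, ∀ x₁ ∈ s, ∀ x₂ ∈ s, ∫ x in x₁..x₂, f (x, y) = ∫ x in x₁..x₂, g (x, y) := by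
  filter_upwards [ae_ae_swap_of_ae_restrict_prod hfg] with y hy x₁ hx₁ x₂ hx₂
  refine intervalIntegral.integral_congr_ae ?_
  filter_upwards [(ae_restrict_iff' hs.measurableSet).mp hy] with x hx hxI
  exact hx (hs.uIcc_subset hx₁ hx₂ (uIoc_subset_uIcc hxI))

end MeasureTheory

variable {E : Type*} [NormedAddCommGroup E] [NormedSpace ℝ E] [CompleteSpace E]

theorem ae_eq_zero_of_intervalIntegral_eq_zero {g : ℝ → E} {c d : ℝ} {N : Set ℝ}
    (hg : IntegrableOn g (Ioo c d)) (hN : volume N = 0)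
    (h : ∀ y₁ y₂, y₁ ∉ N → y₂ ∉ N → c < y₁ → y₁ < y₂ → y₂ < d → ∫ y in y₁..y₂, g y = 0) :
    ∀ᵐ y, y ∈ Ioo c d → g y = 0 := by
  rcases le_or_gt d c with hdc | hcd
  · exact ae_of_all _ fun y hy => absurd (hy.1.trans hy.2) hdc.not_gt
  have hgI : IntegrableOn g (uIcc c d) := by
    rwa [uIcc_of_le hcd.le, integrableOn_Icc_iff_integrableOn_Ioo]
  have hNc : ∀ᵐ y, y ∉ N := measure_eq_zero_iff_ae_notMem.mp hN
  set F : ℝ → E := fun y => ∫ t in c..y, g t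
  have hIoo : Ioo c d ⊆ uIcc c d := uIcc_of_le hcd.le ▸ Ioo_subset_Icc_self
  have hF : ContinuousOn F (Ioo c d) :=
    (intervalIntegral.continuousOn_primitive_interval hgI).mono hIoo
  have hsub : ∀ y₁ ∈ Ioo c d, ∀ y₂ ∈ Ioo c d, F y₂ - F y₁ = ∫ y in y₁..y₂, g y := by
    have hii : ∀ y ∈ Ioo c d, IntervalIntegrable g volume c y := fun y hy =>
      hgI.intervalIntegrable.mono_set (uIcc_subset_uIcc left_mem_uIcc (hIoo hy))
    exact fun y₁ hy₁ y₂ hy₂ => intervalIntegral.integral_interval_sub_left (hii y₂ hy₂) (hii y₁ hy₁)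
  obtain ⟨y₀, hy₀, hy₀N⟩ : ∃ y₀ ∈ Ioo c d, y₀ ∉ N :=
    Measure.exists_mem_of_measure_ne_zero_of_ae (by simpa using hcd) (ae_restrict_of_ae hNc)
  have hconst : EqOn F (fun _ => F y₀) (Ioo c d) := by
    refine Measure.eqOn_open_of_ae_eq (μ := volume) ?_ isOpen_Ioo hF continuousOn_const
    filter_upwards [ae_restrict_mem measurableSet_Ioo, ae_restrict_of_ae hNc] with y hy hyN
    rcases lt_trichotomy y₀ y with hlt | rfl | hlt
    · exact sub_eq_zero.mp <| (hsub y₀ hy₀ y hy).trans (h _ _ hy₀N hyN hy₀.1 hlt hy.2)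
    · rfl
    · exact (sub_eq_zero.mp <| (hsub y hy y₀ hy₀).trans (h _ _ hyN hy₀N hy.1 hlt hy₀.2)).symm
  filter_upwards [hgI.intervalIntegrable.ae_hasDerivAt_integral] with y hderiv hy
  have hF' : HasDerivAt F 0 y :=
    (hasDerivAt_const y (F y₀)).congr_of_eventuallyEq
      (eventually_of_mem (isOpen_Ioo.mem_nhds hy) hconst)
  exact (hderiv (hIoo hy) c left_mem_uIcc).unique hF'

theorem ae_eq_of_intervalIntegral_eq {g₁ g₂ : ℝ → E} {c d : ℝ} {N : Set ℝ}
    (hg₁ : IntegrableOn g₁ (Ioo c d)) (hg₂ : IntegrableOn g₂ (Ioo c d)) (hN : volume N = 0)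
    (h : ∀ y₁ y₂, y₁ ∉ N → y₂ ∉ N → c < y₁ → y₁ < y₂ → y₂ < d →
      ∫ y in y₁..y₂, g₁ y = ∫ y in y₁..y₂, g₂ y) :
    ∀ᵐ y, y ∈ Ioo c d → g₁ y = g₂ y := by
  refine (ae_eq_zero_of_intervalIntegral_eq_zero (hg₁.sub hg₂) hN
    fun y₁ y₂ h₁ h₂ hc hlt hd => ?_).mono fun y hy hyI => sub_eq_zero.mp (hy hyI)
  have hsub : uIcc y₁ y₂ ⊆ Ioo c d :=
    ordConnected_Ioo.uIcc_subset ⟨hc, hlt.trans hd⟩ ⟨hc.trans hlt, hd⟩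
  rw [Pi.sub_def, intervalIntegral.integral_sub ((hg₁.mono_set hsub).intervalIntegrable)
    ((hg₂.mono_set hsub).intervalIntegrable), h y₁ y₂ h₁ h₂ hc hlt hd, sub_self]

def HasRectangleIncrements (u g : ℝ × ℝ → ℝ) (a b c d : ℝ) (NX NY : Set ℝ) : Prop :=
  ∀ X₁ X₂ : ℝ, X₁ ∉ NX → X₂ ∉ NX → a < X₁ → X₁ < X₂ → X₂ < b →
    ∀ Y₁ Y₂ : ℝ, Y₁ ∉ NY → Y₂ ∉ NY → c < Y₁ → Y₁ < Y₂ → Y₂ < d →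
      ∫ Y in Y₁..Y₂, (u (X₂, Y) - u (X₁, Y)) = ∫ Y in Y₁..Y₂, ∫ X in X₁..X₂, g (X, Y)

namespace HasRectangleIncrements

variable {u f g : ℝ × ℝ → ℝ} {a b c d : ℝ} {NX NY : Set ℝ}

theorem of_ae_intervalIntegral_eq (h : HasRectangleIncrements u f a b c d NX NY)
    (hfg : ∀ᵐ Y, Y ∈ Ioo c d → ∀ X₁ ∈ Ioo a b, ∀ X₂ ∈ Ioo a b,
      ∫ X in X₁..X₂, f (X, Y) = ∫ X in X₁..X₂, g (X, Y)) :
    HasRectangleIncrements u g a b c d NX NY := by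
  intro X₁ X₂ hX₁ hX₂ ha hX hb Y₁ Y₂ hY₁ hY₂ hc hY hd
  rw [h X₁ X₂ hX₁ hX₂ ha hX hb Y₁ Y₂ hY₁ hY₂ hc hY hd]
  refine intervalIntegral.integral_congr_ae ?_
  filter_upwards [hfg] with Y hYfg hYI
  exact hYfg (ordConnected_Ioo.uIcc_subset ⟨hc, hY.trans hd⟩ ⟨hc.trans hY, hd⟩
    (uIoc_subset_uIcc hYI)) X₁ ⟨ha, hX.trans hb⟩ X₂ ⟨ha.trans hX, hb⟩

theorem ae_sub_eq (h : HasRectangleIncrements u g a b c d NX NY) (hNY : volume NY = 0)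
    (hg : IntegrableOn g (Ioo a b ×ˢ Ioo c d)) {X₁ X₂ : ℝ}
    (hX₁ : X₁ ∈ Ioo a b \ NX) (hX₂ : X₂ ∈ Ioo a b \ NX)
    (hu₁ : IntegrableOn (fun Y => u (X₁, Y)) (Ioo c d))
    (hu₂ : IntegrableOn (fun Y => u (X₂, Y)) (Ioo c d)) :
    ∀ᵐ Y, Y ∈ Ioo c d → u (X₂, Y) - u (X₁, Y) = ∫ X in X₁..X₂, g (X, Y) := by
  wlog hle : X₁ ≤ X₂ generalizing X₁ X₂
  · filter_upwards [this hX₂ hX₁ hu₂ hu₁ (le_of_not_ge hle)] with Y hY hYI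
    rw [intervalIntegral.integral_symm, ← hY hYI, neg_sub]
  rcases hle.eq_or_lt with rfl | hlt
  · simp
  exact ae_eq_of_intervalIntegral_eq (hu₂.sub hu₁)
    (hg.intervalIntegral_prod_right (ordConnected_Ioo.uIcc_subset hX₁.1 hX₂.1)) hNY
    (h X₁ X₂ hX₁.2 hX₂.2 hX₁.1.1 hlt hX₂.1.2)

theorem exists_ae_eq_primitive (h : HasRectangleIncrements u g a b c d NX NY) (hab : a < b)
    (hu : Measurable u) (hui : IntegrableOn u (Ioo a b ×ˢ Ioo c d))
    (hg : StronglyMeasurable g) (hgi : IntegrableOn g (Ioo a b ×ˢ Ioo c d))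
    (hNX : volume NX = 0) (hNY : volume NY = 0) :
    ∃ v : ℝ × ℝ → ℝ,
      (∀ᵐ p, p ∈ Ioo a b ×ˢ Ioo c d → v p = u p) ∧
      ∀ᵐ Y₀, Y₀ ∈ Ioo c d → ∀ X₁ ∈ Ioo a b, ∀ X₂ ∈ Ioo a b,
        v (X₂, Y₀) - v (X₁, Y₀) = ∫ X in X₁..X₂, g (X, Y₀) := by
  have hgood : ∀ᵐ X ∂volume.restrict (Ioo a b),
      X ∉ NX ∧ IntegrableOn (fun Y => u (X, Y)) (Ioo c d) :=
    (ae_restrict_of_ae (measure_eq_zero_iff_ae_notMem.mp hNX)).and hui.prod_right_ae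
  obtain ⟨x₀, hx₀, hx₀N, hux₀⟩ :=
    Measure.exists_mem_of_measure_ne_zero_of_ae (by simpa using hab) hgood
  set v : ℝ × ℝ → ℝ := fun p => u (x₀, p.2) + ∫ S in x₀..p.1, g (S, p.2)
  have hv : Measurable v :=
    (hu.comp (measurable_const.prodMk measurable_snd)).add
      (stronglyMeasurable_intervalIntegral (F := fun p S => g (S, p.2))
        (hg.comp_measurable (measurable_snd.prodMk measurable_fst.snd)) measurable_const
        measurable_fst).measurable
  refine ⟨v, ?_, ?_⟩
  · have hmeas : MeasurableSet {p : ℝ × ℝ | p ∈ Ioo a b ×ˢ Ioo c d → v p = u p} :=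
      (measurableSet_Ioo.prod measurableSet_Ioo).imp (measurableSet_eq_fun hv hu)
    rw [Measure.volume_eq_prod, Measure.ae_prod_iff_ae_ae hmeas]
    filter_upwards [(ae_restrict_iff' measurableSet_Ioo).mp hgood] with X hX
    by_cases hXI : X ∈ Ioo a b
    · filter_upwards [h.ae_sub_eq hNY hgi ⟨hx₀, hx₀N⟩ ⟨hXI, (hX hXI).1⟩ hux₀ (hX hXI).2]
        with Y hY hXY
      simp only [v]
      linarith [hY hXY.2]
    · exact ae_of_all _ fun Y hXY => absurd hXY.1 hXI
  · filter_upwards [(ae_restrict_iff' measurableSet_Ioo).mp hgi.prod_left_ae]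
      with Y₀ hY₀ hY₀I X₁ hX₁ X₂ hX₂
    have hint : ∀ X ∈ Ioo a b, IntervalIntegrable (fun S => g (S, Y₀)) volume x₀ X := fun X hX =>
      ((hY₀ hY₀I).mono_set (ordConnected_Ioo.uIcc_subset hx₀ hX)).intervalIntegrable
    simp only [v, add_sub_add_left_eq_sub]
    exact intervalIntegral.integral_interval_sub_left (hint X₂ hX₂) (hint X₁ hX₁)

end HasRectangleIncrements

theorem stmt18_general (a b c d : ℝ) (hab : a < b)
    (u f : ℝ × ℝ → ℝ)
    (humeas : Measurable u)
    (hu : ∃ Mb : ℝ, ∀ᵐ p ∂volume, p ∈ Set.Ioo a b ×ˢ Set.Ioo c d → |u p| ≤ Mb)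
    (hf : IntegrableOn f (Set.Ioo a b ×ˢ Set.Ioo c d))
    (NX NY : Set ℝ) (hNX : volume NX = 0) (hNY : volume NY = 0)
    (hrect : ∀ X₁ X₂ : ℝ, X₁ ∉ NX → X₂ ∉ NX → a < X₁ → X₁ < X₂ → X₂ < b →
      ∀ Y₁ Y₂ : ℝ, Y₁ ∉ NY → Y₂ ∉ NY → c < Y₁ → Y₁ < Y₂ → Y₂ < d →
        ∫ Y in Y₁..Y₂, (u (X₂, Y) - u (X₁, Y)) =
          ∫ Y in Y₁..Y₂, ∫ X in X₁..X₂, f (X, Y)) :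
    ∃ v : ℝ × ℝ → ℝ,
      (∀ᵐ p ∂volume, p ∈ Set.Ioo a b ×ˢ Set.Ioo c d → v p = u p) ∧
      ∀ᵐ Y₀ ∂volume, Y₀ ∈ Set.Ioo c d →
        ∀ X₁ X₂ : ℝ, a < X₁ → X₁ ≤ X₂ → X₂ < b →
          v (X₂, Y₀) - v (X₁, Y₀) = ∫ X in X₁..X₂, f (X, Y₀) := by
  obtain ⟨M, hM⟩ := hu
  have hui : IntegrableOn u (Ioo a b ×ˢ Ioo c d) :=
    Measure.integrableOn_of_bounded
      ((Metric.isBounded_Ioo a b).prod (Metric.isBounded_Ioo c d)).measure_lt_top.ne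
      humeas.aestronglyMeasurable
      ((ae_restrict_iff' (measurableSet_Ioo.prod measurableSet_Ioo)).mpr hM)
  have hfg := hf.aestronglyMeasurable.ae_eq_mk
  have hsec := (ae_restrict_iff' measurableSet_Ioo).mp
    (ae_restrict_intervalIntegral_eq_of_ae_eq_prod ordConnected_Ioo hfg)
  obtain ⟨v, hvu, hv⟩ := (HasRectangleIncrements.of_ae_intervalIntegral_eq hrect hsec)
    |>.exists_ae_eq_primitive hab humeas hui hf.aestronglyMeasurable.stronglyMeasurable_mk
      (hf.congr hfg) hNX hNY
  refine ⟨v, hvu, ?_⟩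
  filter_upwards [hv, hsec] with Y₀ hvY₀ hsecY₀ hY₀ X₁ X₂ ha hX hb
  rw [hvY₀ hY₀ X₁ ⟨ha, hX.trans_lt hb⟩ X₂ ⟨ha.trans_le hX, hb⟩,
    hsecY₀ hY₀ X₁ ⟨ha, hX.trans_lt hb⟩ X₂ ⟨ha.trans_le hX, hb⟩]

/-- Technical lemma (ii): integrated increments over almost-all rectangles yield,
after modification on a null set, absolute continuity along a.e. horizontal line
with derivative f. -/
theorem stmt18 (a b c d : ℝ) (hab : a < b) (hcd : c < d)
    (u f : ℝ × ℝ → ℝ)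
    (humeas : Measurable u)
    (hu : ∃ Mb : ℝ, ∀ᵐ p ∂volume, p ∈ Set.Ioo a b ×ˢ Set.Ioo c d → |u p| ≤ Mb)
    (hf : IntegrableOn f (Set.Ioo a b ×ˢ Set.Ioo c d))
    (NX NY : Set ℝ) (hNX : volume NX = 0) (hNY : volume NY = 0)
    (hrect : ∀ X₁ X₂ : ℝ, X₁ ∉ NX → X₂ ∉ NX → a < X₁ → X₁ < X₂ → X₂ < b →
      ∀ Y₁ Y₂ : ℝ, Y₁ ∉ NY → Y₂ ∉ NY → c < Y₁ → Y₁ < Y₂ → Y₂ < d →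
        ∫ Y in Y₁..Y₂, (u (X₂, Y) - u (X₁, Y)) =
          ∫ Y in Y₁..Y₂, ∫ X in X₁..X₂, f (X, Y)) :
    ∃ v : ℝ × ℝ → ℝ,
      (∀ᵐ p ∂volume, p ∈ Set.Ioo a b ×ˢ Set.Ioo c d → v p = u p) ∧
      ∀ᵐ Y₀ ∂volume, Y₀ ∈ Set.Ioo c d →
        ∀ X₁ X₂ : ℝ, a < X₁ → X₁ ≤ X₂ → X₂ < b →
          v (X₂, Y₀) - v (X₁, Y₀) = ∫ X in X₁..X₂, f (X, Y₀) :=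
  stmt18_general a b c d hab u f humeas hu hf NX NY hNX hNY hrect
end
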